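/- Assumptions and notation as in the Section 4 construction: (W,S) is an irreducible Coxeter system of finite rank with m_{st} < ∞ for all s,t ∈ S, whose Coxeter graph G is not a tree, with fixed s_1, s_2 ∈ S such that m := m_{s_1s_2} ≥ 4; p : G′ → G is the universal covering with fixed edge {s_1′, s_2′} over {s_1, s_2}, and V = ⊕_{a∈S′} ℂ α_a is the resulting representation of W. Let V_0 := {v ∈ V : s·v = v for all s ∈ S}, and assume (after possibly exchanging s_1 and s_2) that S_1′ := {a ∈ S′ : d(a,s_1′) < d(a,s_2′)} is infinite, where d is the distance in the tree G′. If m > 4, then the quotient representation V̄ := V / V_0 of W is irreducible and of infinite dimension. -/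

import Mathlib

/-- The Coxeter graph of a Coxeter matrix `M`: two distinct vertices `s, t` are adjacent iff
`M s t ≥ 3` or `M s t = ∞` (encoded as `0` in Mathlib), i.e. iff `M s t ≠ 2`. -/
def coxeterGraph {B : Type*} (M : CoxeterMatrix B) : SimpleGraph B where
  Adj s t := s ≠ t ∧ M s t ≠ 2
  symm := by
    constructor
    intro s t h
    exact ⟨h.1.symm, by rw [M.symmetric]; exact h.2⟩
  loopless := by constructor; intro s h; exact h.1 rfl

open Finsupp Classical in
/-- The Section 4 operators: for each `s ∈ S`, a linear operator on `V = ⊕_{a ∈ S′} ℂ α_a`,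
where `S′` is the vertex set of the universal covering `p : G′ → G` of the Coxeter graph `G`,
and `α_a = Finsupp.single a 1`.  Here `{s₁′, s₂′}` is the fixed edge of `G′` over the edge
`{s₁, s₂}` of `G` (with `m = m_{s₁s₂} ≥ 4`).  The defining formulas are:
(i) if `p a = s` then `s·α_a = −α_a`;
(ii) `s₁·α_{s₂′} = α_{s₂′} + 2cos(2π/m) α_{s₁′}` and `s₂·α_{s₁′} = α_{s₁′} + 2cos(2π/m) α_{s₂′}`;
(iii) otherwise, if `s` is not adjacent to `p a` in `G` (equivalently, under the covering
hypotheses, `a` has no neighbour in `G′` lying over `s`), then `s·α_a = α_a`;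
(iv) otherwise `s·α_a = α_a + 2cos(π/m_{s,p(a)}) α_b`, where `b` is the unique neighbour of `a`
in `G′` with `p b = s`. -/
noncomputable def sec4Act {B B' : Type*} (M : CoxeterMatrix B) (G' : SimpleGraph B')
    (p : B' → B) (s₁ s₂ : B) (s₁' s₂' : B') (s : B) : (B' →₀ ℂ) →ₗ[ℂ] (B' →₀ ℂ) :=
  Finsupp.lift _ ℂ _ fun a =>
    if p a = s then -single a 1
    else if s = s₁ ∧ a = s₂' then
      single s₂' 1 + (2 * Real.cos (2 * Real.pi / (M s₁ s₂ : ℝ)) : ℂ) • single s₁' 1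
    else if s = s₂ ∧ a = s₁' then
      single s₁' 1 + (2 * Real.cos (2 * Real.pi / (M s₁ s₂ : ℝ)) : ℂ) • single s₂' 1
    else if h : ∃ b, G'.Adj a b ∧ p b = s then
      single a 1 + (2 * Real.cos (Real.pi / (M s (p a) : ℝ)) : ℂ) • single h.choose 1
    else single a 1

/-- The subspace of vectors fixed by all the operators `σ s`. -/
def fixedSubmodule {B V : Type*} [AddCommGroup V] [Module ℂ V]
    (σ : B → V →ₗ[ℂ] V) : Submodule ℂ V where
  carrier := {v | ∀ s, σ s v = v}
  add_mem' := by
    intro a b ha hb s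
    simp [map_add, ha s, hb s]
  zero_mem' := by intro s; simp
  smul_mem' := by
    intro c a ha s
    simp [map_smul, ha s]

/-!
If `v ∉ V₀`, then some `σ s v - v` is a nonzero vector supported on the fibre over `s`. Along an
edge `a — b` of `G'`, `σ (p b) - 1` maps a vector supported on the fibre of `a` to one supported
on the fibre of `b`, whose `b`-coordinate is a nonzero multiple of its `a`-coordinate. Walking to
`s₁'` and applying `(σ s₁ - 1)(σ s₂ - 1) - 4 cos² (π/m)`, which on the fibre over `s₁` kills
every `α_x` except `α_{s₁'}` (here `cos² (2π/m) ≠ cos² (π/m)`), puts `α_{s₁'}` into every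
invariant `U ⊄ V₀`; moving it along the edges of the connected graph `G'` then gives all `α_a`.
For the dimension: `σ s = -1` on vectors supported on the fibre over `s`, so these meet `V₀`
trivially, and some fibre of `p` is infinite.
-/

open Finsupp Real

lemma cos_pi_div_pos {x : ℝ} (hx : 2 < x) : 0 < cos (π / x) := by
  apply cos_pos_of_mem_Ioo
  constructor
  · linarith [pi_pos, div_pos pi_pos (by linarith : (0 : ℝ) < x)]
  · exact div_lt_div_of_pos_left pi_pos two_pos hx

lemma cos_two_mul_pi_div_pos {x : ℝ} (hx : 4 < x) : 0 < cos (2 * π / x) := by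
  apply cos_pos_of_mem_Ioo
  constructor
  · linarith [pi_pos, div_pos (mul_pos two_pos pi_pos) (by linarith : (0 : ℝ) < x)]
  · calc 2 * π / x < 2 * π / 4 := div_lt_div_of_pos_left (by positivity) four_pos hx
      _ = π / 2 := by ring

lemma cos_two_mul_pi_div_lt_cos_pi_div {x : ℝ} (hx : 2 ≤ x) :
    cos (2 * π / x) < cos (π / x) := by
  have hx0 : 0 < x := by linarith
  apply cos_lt_cos_of_nonneg_of_le_pi (div_pos pi_pos hx0).le
  · rw [div_le_iff₀ hx0]
    nlinarith [pi_pos]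
  · exact div_lt_div_of_pos_right (by linarith [pi_pos]) hx0

lemma two_mul_cos_ne_zero {θ : ℝ} (h : 0 < cos θ) : (2 * cos θ : ℂ) ≠ 0 :=
  mul_ne_zero two_ne_zero (Complex.ofReal_ne_zero.mpr h.ne')

lemma sq_two_mul_cos_sub_sq_ne_zero {x : ℝ} (hx : 4 < x) :
    (2 * cos (2 * π / x) : ℂ) ^ 2 - (2 * cos (π / x) : ℂ) ^ 2 ≠ 0 := by
  have h₁ := cos_two_mul_pi_div_pos hx
  have h₂ := cos_two_mul_pi_div_lt_cos_pi_div (by linarith : 2 ≤ x)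
  have : (2 * cos (2 * π / x)) ^ 2 - (2 * cos (π / x)) ^ 2 < 0 := by nlinarith
  exact_mod_cast this.ne

section
variable {B B' : Type*} {M : CoxeterMatrix B} {G' : SimpleGraph B'} {p : B' → B}
  {s₁ s₂ : B} {s₁' s₂' : B'}

local notation "σ" => sec4Act M G' p s₁ s₂ s₁' s₂'

open Classical in
lemma sec4Act_single (s : B) (a : B') :
    σ s (single a 1) =
      if p a = s then -single a 1
      else if s = s₁ ∧ a = s₂' then
        single s₂' 1 + (2 * Real.cos (2 * Real.pi / (M s₁ s₂ : ℝ)) : ℂ) • single s₁' 1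
      else if s = s₂ ∧ a = s₁' then
        single s₁' 1 + (2 * Real.cos (2 * Real.pi / (M s₁ s₂ : ℝ)) : ℂ) • single s₂' 1
      else if h : ∃ b, G'.Adj a b ∧ p b = s then
        single a 1 + (2 * Real.cos (Real.pi / (M s (p a) : ℝ)) : ℂ) • single h.choose 1
      else single a 1 := by
  rw [sec4Act, lift_apply, sum_single_index (by simp), one_smul]

lemma sec4Act_single_of_map_eq {s : B} {a : B'} (h : p a = s) :
    σ s (single a 1) = -single a 1 := by
  rw [sec4Act_single, if_pos h]

lemma sec4Act_s₁_single_s₂' (h : p s₂' ≠ s₁) :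
    σ s₁ (single s₂' 1) =
      single s₂' 1 + (2 * Real.cos (2 * Real.pi / (M s₁ s₂ : ℝ)) : ℂ) • single s₁' 1 := by
  rw [sec4Act_single, if_neg h, if_pos ⟨rfl, rfl⟩]

lemma sec4Act_s₂_single_s₁' (h : p s₁' ≠ s₂) (h₁₂ : s₁ ≠ s₂) :
    σ s₂ (single s₁' 1) =
      single s₁' 1 + (2 * Real.cos (2 * Real.pi / (M s₁ s₂ : ℝ)) : ℂ) • single s₂' 1 := by
  rw [sec4Act_single, if_neg h, if_neg fun h' => h₁₂ h'.1.symm, if_pos ⟨rfl, rfl⟩]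

lemma sec4Act_eq_neg_of_mem_supported {s : B} {v : B' →₀ ℂ}
    (hv : v ∈ supported ℂ ℂ (p ⁻¹' {s})) : σ s v = -v := by
  rw [supported_eq_span_single] at hv
  refine LinearMap.eqOn_span' (g := -LinearMap.id) ?_ hv
  rintro _ ⟨a, ha, rfl⟩
  exact sec4Act_single_of_map_eq ha

lemma sec4Act_single_apply_of_map_ne (hp₁ : p s₁' = s₁) (hp₂ : p s₂' = s₂) {s : B} {y : B'}
    (hy : p y ≠ s) (x : B') : σ s (single x 1) y = single x 1 y := by
  rw [sec4Act_single]
  split_ifs with h₁ h₂ h₃ h₄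
  · simp [single_eq_of_ne' (show x ≠ y by rintro rfl; exact hy h₁)]
  · obtain ⟨rfl, rfl⟩ := h₂
    simp [single_eq_of_ne' (show s₁' ≠ y by rintro rfl; exact hy hp₁)]
  · obtain ⟨rfl, rfl⟩ := h₃
    simp [single_eq_of_ne' (show s₂' ≠ y by rintro rfl; exact hy hp₂)]
  · simp [single_eq_of_ne' (show h₄.choose ≠ y by intro h; exact hy (h ▸ h₄.choose_spec.2))]
  · rfl

lemma sec4Act_apply_of_map_ne (hp₁ : p s₁' = s₁) (hp₂ : p s₂' = s₂) {s : B} {y : B'}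
    (hy : p y ≠ s) (v : B' →₀ ℂ) : σ s v y = v y := by
  induction v using Finsupp.induction_linear with
  | zero => simp
  | add v w hv hw => simp [hv, hw]
  | single x c =>
    rw [← smul_single_one, map_smul, Finsupp.smul_apply, Finsupp.smul_apply,
      sec4Act_single_apply_of_map_ne hp₁ hp₂ hy]

lemma sec4Act_sub_self_mem_supported (hp₁ : p s₁' = s₁) (hp₂ : p s₂' = s₂) (s : B)
    (v : B' →₀ ℂ) : σ s v - v ∈ supported ℂ ℂ (p ⁻¹' {s}) :=
  (mem_supported' _ _).mpr fun y hy => by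
    rw [Finsupp.sub_apply, sec4Act_apply_of_map_ne hp₁ hp₂ hy, sub_self]

lemma sec4Act_single_apply_eq_zero (hedge : G'.Adj s₁' s₂') (s : B) {x y : B'} (hxy : x ≠ y)
    (hadj : ¬ G'.Adj x y) : σ s (single x 1) y = 0 := by
  rw [sec4Act_single]
  split_ifs with h₁ h₂ h₃ h₄
  · simp [single_eq_of_ne' hxy]
  · obtain ⟨rfl, rfl⟩ := h₂
    simp [single_eq_of_ne' hxy, single_eq_of_ne' (show s₁' ≠ y by rintro rfl; exact hadj hedge.symm)]
  · obtain ⟨rfl, rfl⟩ := h₃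
    simp [single_eq_of_ne' hxy, single_eq_of_ne' (show s₂' ≠ y by rintro rfl; exact hadj hedge)]
  · simp [single_eq_of_ne' hxy,
      single_eq_of_ne' (show h₄.choose ≠ y by intro h; exact hadj (h ▸ h₄.choose_spec.1))]
  · simp [single_eq_of_ne' hxy]

lemma sec4Act_apply_eq_zero_of_mem_supported (hedge : G'.Adj s₁' s₂') (s : B) {y : B'}
    {v : B' →₀ ℂ} (hv : v ∈ supported ℂ ℂ {x | x ≠ y ∧ ¬ G'.Adj x y}) : σ s v y = 0 := by
  rw [supported_eq_span_single] at hv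
  refine LinearMap.eqOn_span' (f := lapply y ∘ₗ σ s) (g := 0) ?_ hv
  rintro _ ⟨x, ⟨hxy, hadj⟩, rfl⟩
  exact sec4Act_single_apply_eq_zero hedge s hxy hadj

lemma fixedSubmodule_disjoint_supported_fiber (s : B) :
    Disjoint (fixedSubmodule σ) (supported ℂ ℂ (p ⁻¹' {s})) := by
  rw [Submodule.disjoint_def]
  intro v hfix hv
  have := hfix s
  rw [sec4Act_eq_neg_of_mem_supported hv] at this
  exact self_eq_neg.mp this.symm

lemma not_finite_quotient_fixedSubmodule [Finite B] [Infinite B'] :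
    ¬ Module.Finite ℂ ((B' →₀ ℂ) ⧸ fixedSubmodule σ) := by
  intro hfin
  obtain ⟨s, hs⟩ := Finite.exists_infinite_fiber p
  have hli : LinearIndependent ℂ
      (fun a : p ⁻¹' {s} => (fixedSubmodule σ).mkQ (single (a : B') (1 : ℂ))) := by
    refine ((linearIndependent_single_one ℂ B').comp _ Subtype.val_injective).map ?_
    rw [Submodule.ker_mkQ]
    refine (fixedSubmodule_disjoint_supported_fiber s).symm.mono_left (Submodule.span_le.mpr ?_)
    rintro _ ⟨a, rfl⟩
    exact single_mem_supported ℂ 1 a.2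
  have := hli.finite
  exact not_finite (p ⁻¹' {s})

end

structure IsSec4Covering {B B' : Type*} (M : CoxeterMatrix B) (G' : SimpleGraph B')
    (p : B' → B) (s₁ s₂ : B) (s₁' s₂' : B') : Prop where
  entry_ne_zero : ∀ s t, M s t ≠ 0
  map_adj : ∀ a b, G'.Adj a b → (coxeterGraph M).Adj (p a) (p b)
  bijOn_neighborSet : ∀ a, Set.BijOn p (G'.neighborSet a) ((coxeterGraph M).neighborSet (p a))
  adj : G'.Adj s₁' s₂'
  map_s₁' : p s₁' = s₁
  map_s₂' : p s₂' = s₂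
  four_lt : 4 < M s₁ s₂

namespace IsSec4Covering

variable {B B' : Type*} {M : CoxeterMatrix B} {G' : SimpleGraph B'} {p : B' → B}
  {s₁ s₂ : B} {s₁' s₂' : B'}

local notation "σ" => sec4Act M G' p s₁ s₂ s₁' s₂'

lemma map_ne_of_adj (h : IsSec4Covering M G' p s₁ s₂ s₁' s₂') {a b : B'} (hab : G'.Adj a b) :
    p a ≠ p b :=
  (h.map_adj a b hab).1

lemma three_le_of_adj (h : IsSec4Covering M G' p s₁ s₂ s₁' s₂') {a b : B'}
    (hab : G'.Adj a b) : 3 ≤ M (p a) (p b) := by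
  have := M.off_diagonal _ _ (h.map_ne_of_adj hab)
  have := (h.map_adj a b hab).2
  have := h.entry_ne_zero (p a) (p b)
  omega

lemma eq_of_adj_of_adj (h : IsSec4Covering M G' p s₁ s₂ s₁' s₂') {a b c : B'}
    (hb : G'.Adj a b) (hc : G'.Adj a c) (hbc : p b = p c) : b = c :=
  (h.bijOn_neighborSet a).injOn hb hc hbc

lemma s₁_ne_s₂ (h : IsSec4Covering M G' p s₁ s₂ s₁' s₂') : s₁ ≠ s₂ :=
  h.map_s₁' ▸ h.map_s₂' ▸ h.map_ne_of_adj h.adj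

lemma exists_adj_map_eq_s₂ (h : IsSec4Covering M G' p s₁ s₂ s₁' s₂') {x : B'}
    (hx : p x = s₁) : ∃ y, G'.Adj x y ∧ p y = s₂ :=
  (h.bijOn_neighborSet x).surjOn (show (coxeterGraph M).Adj (p x) s₂ from
    hx ▸ ⟨h.s₁_ne_s₂, by have := h.four_lt; omega⟩)

lemma sec4Act_single_of_adj (h : IsSec4Covering M G' p s₁ s₂ s₁' s₂') {a b : B'}
    (hab : G'.Adj a b) (h₁ : ¬ (p b = s₁ ∧ a = s₂')) (h₂ : ¬ (p b = s₂ ∧ a = s₁')) :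
    σ (p b) (single a 1) =
      single a 1 + (2 * Real.cos (Real.pi / (M (p b) (p a) : ℝ)) : ℂ) • single b 1 := by
  have hex : ∃ c, G'.Adj a c ∧ p c = p b := ⟨b, hab, rfl⟩
  rw [sec4Act_single, if_neg (h.map_ne_of_adj hab), if_neg h₁, if_neg h₂, dif_pos hex,
    h.eq_of_adj_of_adj hex.choose_spec.1 hab hex.choose_spec.2]

/-- On the marked edge the coefficient is `2 cos (2π/m)`, nonzero because `m > 4`. -/
lemma exists_sec4Act_single_of_adj (h : IsSec4Covering M G' p s₁ s₂ s₁' s₂') {a b : B'}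
    (hab : G'.Adj a b) : ∃ c ≠ (0 : ℂ), σ (p b) (single a 1) = single a 1 + c • single b 1 := by
  have hμ : (2 * Real.cos (2 * Real.pi / (M s₁ s₂ : ℝ)) : ℂ) ≠ 0 :=
    two_mul_cos_ne_zero (cos_two_mul_pi_div_pos (by exact_mod_cast h.four_lt))
  by_cases h₁ : p b = s₁ ∧ a = s₂'
  · obtain ⟨hb, rfl⟩ := h₁
    rw [h.eq_of_adj_of_adj hab h.adj.symm (hb.trans h.map_s₁'.symm), h.map_s₁']
    exact ⟨_, hμ, sec4Act_s₁_single_s₂' (h.map_s₂'.trans_ne h.s₁_ne_s₂.symm)⟩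
  by_cases h₂ : p b = s₂ ∧ a = s₁'
  · obtain ⟨hb, rfl⟩ := h₂
    rw [h.eq_of_adj_of_adj hab h.adj (hb.trans h.map_s₂'.symm), h.map_s₂']
    exact ⟨_, hμ, sec4Act_s₂_single_s₁' (h.map_s₁'.trans_ne h.s₁_ne_s₂) h.s₁_ne_s₂⟩
  refine ⟨_, two_mul_cos_ne_zero (cos_pi_div_pos ?_), h.sec4Act_single_of_adj hab h₁ h₂⟩
  exact_mod_cast h.three_le_of_adj hab.symm

lemma exists_sec4Act_sub_self_apply (h : IsSec4Covering M G' p s₁ s₂ s₁' s₂') {a b : B'}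
    (hab : G'.Adj a b) {u : B' →₀ ℂ} (hu : u ∈ supported ℂ ℂ (p ⁻¹' {p a})) :
    ∃ c ≠ (0 : ℂ), (σ (p b) u - u) b = c * u a := by
  obtain ⟨c, hc, hσ⟩ := h.exists_sec4Act_single_of_adj hab
  refine ⟨c, hc, ?_⟩
  have hrest : u.erase a ∈ supported ℂ ℂ {x | x ≠ b ∧ ¬ G'.Adj x b} := by
    refine (mem_supported ℂ _).mpr fun x hx => ?_
    classical
    rw [Finset.mem_coe, support_erase, Finset.mem_erase] at hx
    have hpx : p x = p a := (mem_supported ℂ u).mp hu hx.2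
    exact ⟨fun hxb => h.map_ne_of_adj hab (hpx ▸ hxb ▸ rfl),
      fun hxb => hx.1 (h.eq_of_adj_of_adj hxb.symm hab.symm hpx)⟩
  have hb : u.erase a b = 0 := ((mem_supported' ℂ _).mp hrest) b (by simp)
  rw [← erase_add_single a u, ← smul_single_one, map_add, map_smul, hσ]
  simp [sec4Act_apply_eq_zero_of_mem_supported h.adj _ hrest, hb,
    single_eq_of_ne' hab.ne, mul_comm]

/-- Every edge between the fibres over `s₁` and `s₂` carries `ν = 2 cos (π/m)` in both
directions except the marked one, which carries `μ = 2 cos (2π/m)`. -/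
lemma sec4Act_sub_one_mul_sub_one_apply (h : IsSec4Covering M G' p s₁ s₂ s₁' s₂')
    {u : B' →₀ ℂ} (hu : u ∈ supported ℂ ℂ (p ⁻¹' {s₁})) :
    σ s₁ (σ s₂ u - u) - (σ s₂ u - u) - (2 * Real.cos (Real.pi / (M s₁ s₂ : ℝ)) : ℂ) ^ 2 • u =
      ((2 * Real.cos (2 * Real.pi / (M s₁ s₂ : ℝ)) : ℂ) ^ 2 -
        (2 * Real.cos (Real.pi / (M s₁ s₂ : ℝ)) : ℂ) ^ 2) • single s₁' (u s₁') := by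
  set ν : ℂ := 2 * Real.cos (Real.pi / (M s₁ s₂ : ℝ))
  set μ : ℂ := 2 * Real.cos (2 * Real.pi / (M s₁ s₂ : ℝ))
  let L : Module.End ℂ (B' →₀ ℂ) := (σ s₁ - 1) * (σ s₂ - 1) - ν ^ 2 • 1
  have hL : ∀ v, L v = σ s₁ (σ s₂ v - v) - (σ s₂ v - v) - ν ^ 2 • v := fun v => by
    simp only [L, LinearMap.sub_apply, Module.End.mul_apply, LinearMap.smul_apply,
      Module.End.one_apply, map_sub]
    abel
  rw [← hL]
  rw [supported_eq_span_single] at hu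
  refine LinearMap.eqOn_span' (g := (μ ^ 2 - ν ^ 2) • (lsingle s₁' ∘ₗ lapply s₁')) ?_ hu
  rintro _ ⟨x, hx, rfl⟩
  rw [Set.mem_preimage, Set.mem_singleton_iff] at hx
  dsimp only
  rw [hL]
  by_cases hxs : x = s₁'
  · subst x
    rw [sec4Act_s₂_single_s₁' (hx.trans_ne h.s₁_ne_s₂) h.s₁_ne_s₂, add_sub_cancel_left,
      map_smul, sec4Act_s₁_single_s₂' (h.map_s₂'.trans_ne h.s₁_ne_s₂.symm)]
    simp only [LinearMap.smul_apply, LinearMap.comp_apply, lapply_apply, single_eq_same,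
      lsingle_apply]
    rw [smul_add, smul_smul, add_sub_cancel_left, ← sub_smul, sq, sq]
  · obtain ⟨y, hxy, hy⟩ := h.exists_adj_map_eq_s₂ hx
    have hys : y ≠ s₂' := by
      rintro rfl
      exact hxs (h.eq_of_adj_of_adj hxy.symm h.adj.symm (hx.trans h.map_s₁'.symm))
    have hσ₂ := h.sec4Act_single_of_adj hxy (fun h' => h.s₁_ne_s₂ (h'.1.symm.trans hy))
      (fun h' => hxs h'.2)
    have hσ₁ := h.sec4Act_single_of_adj hxy.symm (fun h' => hys h'.2)
      (fun h' => h.s₁_ne_s₂ (hx.symm.trans h'.1))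
    rw [hy, hx, M.symmetric] at hσ₂
    rw [hx, hy] at hσ₁
    rw [hσ₂, add_sub_cancel_left, map_smul, hσ₁]
    simp only [LinearMap.smul_apply, LinearMap.comp_apply, lapply_apply, lsingle_apply,
      single_eq_of_ne' hxs, single_zero, smul_zero]
    rw [smul_add, smul_smul, add_sub_cancel_left, sq, sub_self]

variable {U : Submodule ℂ (B' →₀ ℂ)}

lemma single_mem_of_adj (h : IsSec4Covering M G' p s₁ s₂ s₁' s₂') (hU : ∀ s, ∀ v ∈ U, σ s v ∈ U)
    {a b : B'} (hab : G'.Adj a b) (ha : single a 1 ∈ U) : single b 1 ∈ U := by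
  obtain ⟨c, hc, hσ⟩ := h.exists_sec4Act_single_of_adj hab
  rw [← U.smul_mem_iff hc, ← add_sub_cancel_left (single a 1) (c • single b 1), ← hσ]
  exact sub_mem (hU _ _ ha) ha

lemma single_mem_of_reachable (h : IsSec4Covering M G' p s₁ s₂ s₁' s₂')
    (hU : ∀ s, ∀ v ∈ U, σ s v ∈ U) {a b : B'} (hab : G'.Reachable a b)
    (ha : single a 1 ∈ U) : single b 1 ∈ U := by
  obtain ⟨w⟩ := hab
  induction w with
  | nil => exact ha
  | cons hadj _ ih => exact ih (h.single_mem_of_adj hU hadj ha)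

lemma single_s₁'_mem (h : IsSec4Covering M G' p s₁ s₂ s₁' s₂') (hU : ∀ s, ∀ v ∈ U, σ s v ∈ U)
    {y : B'} (w : G'.Walk y s₁') {u : B' →₀ ℂ} (huU : u ∈ U)
    (hu : u ∈ supported ℂ ℂ (p ⁻¹' {p y})) (hy : u y ≠ 0) : single s₁' 1 ∈ U := by
  induction w generalizing u with
  | nil =>
    rw [h.map_s₁'] at hu
    have hmem := h.sec4Act_sub_one_mul_sub_one_apply hu ▸
      sub_mem (sub_mem (hU _ _ (sub_mem (hU _ _ huU) huU)) (sub_mem (hU _ _ huU) huU))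
        (U.smul_mem _ huU)
    rwa [U.smul_mem_iff (sq_two_mul_cos_sub_sq_ne_zero (by exact_mod_cast h.four_lt)),
      ← smul_single_one, U.smul_mem_iff hy] at hmem
  | cons hadj _ ih =>
    obtain ⟨c, hc, hcu⟩ := h.exists_sec4Act_sub_self_apply hadj hu
    exact ih h hU (sub_mem (hU _ _ huU) huU) (sec4Act_sub_self_mem_supported h.map_s₁' h.map_s₂' _ _)
      (by rw [hcu]; exact mul_ne_zero hc hy)

lemma eq_top_of_not_le_fixedSubmodule (h : IsSec4Covering M G' p s₁ s₂ s₁' s₂')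
    (hconn : G'.Connected) (hU : ∀ s, ∀ v ∈ U, σ s v ∈ U) (hle : ¬ U ≤ fixedSubmodule σ) :
    U = ⊤ := by
  obtain ⟨v, hvU, hv⟩ := SetLike.not_le_iff_exists.mp hle
  obtain ⟨s, hs⟩ : ∃ s, σ s v ≠ v := by simpa [fixedSubmodule] using hv
  obtain ⟨y, hy⟩ := support_nonempty_iff.mpr (sub_ne_zero.mpr hs)
  have hsupp : σ s v - v ∈ supported ℂ ℂ (p ⁻¹' {s}) :=
    sec4Act_sub_self_mem_supported h.map_s₁' h.map_s₂' s v
  have hys : p y = s := (mem_supported ℂ _).mp hsupp hy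
  have hs₁' := h.single_s₁'_mem hU (hconn y s₁').some (sub_mem (hU s v hvU) hvU)
    (hys ▸ hsupp) (mem_support_iff.mp hy)
  rw [eq_top_iff, ← Finsupp.basisSingleOne.span_eq, Submodule.span_le]
  rintro _ ⟨b, rfl⟩
  exact h.single_mem_of_reachable hU (hconn s₁' b) hs₁'

end IsSec4Covering

theorem statement8_general {B B' W : Type*} [Group W] [Fintype B]
    (M : CoxeterMatrix B) (cs : CoxeterSystem M W)
    (hfin : ∀ s t : B, M s t ≠ 0)
    (s₁ s₂ : B)
    (G' : SimpleGraph B') (htree : G'.IsTree) (p : B' → B)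
    (hmorph : ∀ a b : B', G'.Adj a b → (coxeterGraph M).Adj (p a) (p b))
    (hcover : ∀ a : B', Set.BijOn p (G'.neighborSet a) ((coxeterGraph M).neighborSet (p a)))
    (s₁' s₂' : B') (hedge : G'.Adj s₁' s₂') (hp₁ : p s₁' = s₁) (hp₂ : p s₂' = s₂)
    (ρ : Representation ℂ W (B' →₀ ℂ))
    (hρ : ∀ s : B, ρ (cs.simple s) = sec4Act M G' p s₁ s₂ s₁' s₂' s)
    (hinf : {a : B' | G'.dist a s₁' < G'.dist a s₂'}.Infinite)
    (hm4 : 4 < M s₁ s₂) :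
    (¬ Module.Finite ℂ ((B' →₀ ℂ) ⧸ fixedSubmodule (sec4Act M G' p s₁ s₂ s₁' s₂'))) ∧
    ∀ U : Submodule ℂ (B' →₀ ℂ), (∀ w : W, ∀ v ∈ U, ρ w v ∈ U) →
      fixedSubmodule (sec4Act M G' p s₁ s₂ s₁' s₂') ≤ U →
      U = fixedSubmodule (sec4Act M G' p s₁ s₂ s₁' s₂') ∨ U = ⊤ := by
  have h : IsSec4Covering M G' p s₁ s₂ s₁' s₂' := ⟨hfin, hmorph, hcover, hedge, hp₁, hp₂, hm4⟩
  have : Infinite B' := Set.infinite_univ_iff.mp (hinf.mono (Set.subset_univ _))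
  refine ⟨not_finite_quotient_fixedSubmodule, fun U hU hV₀ => ?_⟩
  by_cases hle : U ≤ fixedSubmodule (sec4Act M G' p s₁ s₂ s₁' s₂')
  · exact .inl (le_antisymm hle hV₀)
  · refine .inr (h.eq_top_of_not_le_fixedSubmodule htree.connected (fun s v hv => ?_) hle)
    exact hρ s ▸ hU (cs.simple s) v hv

/-- under the Section 4 assumptions, with `ρ` the resulting representation of `W`
on `V = B' →₀ ℂ`, `V₀ = {v ∈ V : s·v = v for all s ∈ S}`, and with
`S₁′ = {a ∈ S′ : d(a,s₁′) < d(a,s₂′)}` infinite (distances in the tree `G′`): if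
`m = m_{s₁s₂} > 4`, then the quotient representation `V̄ = V / V₀` of `W` is irreducible and
infinite dimensional.  Irreducibility of `V / V₀` is expressed equivalently via the lattice of
invariant subspaces: every `W`-invariant subspace `U` of `V` containing `V₀` equals `V₀` or
`V`. -/
theorem statement8 {B B' W : Type*} [Group W] [Fintype B]
    (M : CoxeterMatrix B) (cs : CoxeterSystem M W)
    (hfin : ∀ s t : B, M s t ≠ 0)
    (hconn : (coxeterGraph M).Connected)
    (hnottree : ¬ (coxeterGraph M).IsTree)
    (s₁ s₂ : B) (hm : 4 ≤ M s₁ s₂)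
    (G' : SimpleGraph B') (htree : G'.IsTree) (p : B' → B)
    (hmorph : ∀ a b : B', G'.Adj a b → (coxeterGraph M).Adj (p a) (p b))
    (hsurj : Function.Surjective p)
    (hcover : ∀ a : B', Set.BijOn p (G'.neighborSet a) ((coxeterGraph M).neighborSet (p a)))
    (s₁' s₂' : B') (hedge : G'.Adj s₁' s₂') (hp₁ : p s₁' = s₁) (hp₂ : p s₂' = s₂)
    (ρ : Representation ℂ W (B' →₀ ℂ))
    (hρ : ∀ s : B, ρ (cs.simple s) = sec4Act M G' p s₁ s₂ s₁' s₂' s)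
    (hinf : {a : B' | G'.dist a s₁' < G'.dist a s₂'}.Infinite)
    (hm4 : 4 < M s₁ s₂) :
    (¬ Module.Finite ℂ ((B' →₀ ℂ) ⧸ fixedSubmodule (sec4Act M G' p s₁ s₂ s₁' s₂'))) ∧
    ∀ U : Submodule ℂ (B' →₀ ℂ), (∀ w : W, ∀ v ∈ U, ρ w v ∈ U) →
      fixedSubmodule (sec4Act M G' p s₁ s₂ s₁' s₂') ≤ U →
      U = fixedSubmodule (sec4Act M G' p s₁ s₂ s₁' s₂') ∨ U = ⊤ :=
  statement8_general M cs hfin s₁ s₂ G' htree p hmorph hcover s₁' s₂' hedge hp₁ hp₂ ρ hρ hinf hm4
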